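/- Let f(t) = t^k, f_i = f([i]_q/[n]_q). Then Δ_q^r f_1 = ([r]_q! · q^{r(r+1)/2} / [n]_q^k) · S_q(k+1, r+1). -/

import Mathlib

open Finset Filter Topology

/-- The q-integer `[m]_q = 1 + q + ... + q^{m-1}`, with `[0]_q = 0`. -/
noncomputable def qInt (q : ℝ) (m : ℕ) : ℝ := ∑ i ∈ Finset.range m, q ^ i

/-- The q-factorial `[n]_q! = [1]_q [2]_q ⋯ [n]_q`. -/
noncomputable def qFact (q : ℝ) (n : ℕ) : ℝ := ∏ i ∈ Finset.range n, qInt q (i + 1)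

/-- The q-binomial coefficient `[n]_q!/([k]_q! [n-k]_q!)` (zero if `k > n`). -/
noncomputable def qBinom (q : ℝ) (n k : ℕ) : ℝ :=
  if k ≤ n then qFact q n / (qFact q k * qFact q (n - k)) else 0

/-- The q-Stirling number of the second kind. -/
noncomputable def qStirling (q : ℝ) (k r : ℕ) : ℝ :=
  (1 / (qFact q r * q ^ (r * (r - 1) / 2))) *
    ∑ i ∈ Finset.range (r + 1),
      (-1 : ℝ) ^ i * q ^ (i * (i - 1) / 2) * qBinom q r i * (qInt q (r - i)) ^ k

/-- The q-forward difference operator on sequences: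
`Δ_q^0 f_i = f_i`, `Δ_q^{r+1} f_i = Δ_q^r f_{i+1} - q^r Δ_q^r f_i`. -/
noncomputable def qDiff (q : ℝ) : ℕ → (ℕ → ℝ) → ℕ → ℝ
  | 0, f, i => f i
  | r + 1, f, i => qDiff q r f (i + 1) - q ^ r * qDiff q r f i

/-- The eigenvalues `λ_{k,q}^{(α,n)}` of the (α,q)-Bernstein operator. -/
noncomputable def lamEig (q α : ℝ) (n k : ℕ) : ℝ :=
  q ^ (k * (k - 1) / 2) * qFact q (n - 2) / (qFact q (n - k) * (qInt q n) ^ k) *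
    ((1 - α) * qInt q (n - k) * qInt q (n - 1 + k) + α * qInt q n * qInt q (n - 1))

/-- The coefficients `a_{n,q}(r,k)` of `T_{n,q,α}(t^k; x) = Σ_r a_{n,q}(r,k) x^r`. -/
noncomputable def aCoef (q α : ℝ) (n r k : ℕ) : ℝ :=
  q ^ (r * (r - 1) / 2) * qFact q (n - 2) / ((qInt q n) ^ k * qFact q (n - r)) *
    ((1 - α) * qInt q (n - r) *
        (qInt q (n + r - 1) * qStirling q (k + 1) (r + 1) -
          qInt q (r + 1) * qInt q (n - 1) * qStirling q k (r + 1)) +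
      α * qInt q n * qInt q (n - 1) * qStirling q k r)

/-- The (α,q)-Bernstein operator, via its forward-difference representation
`T_{n,q,α}(f;x) = Σ_{r=0}^n ((1-α) C_q(n-1,r) Δ_q^r g_0 + α C_q(n,r) Δ_q^r f_0) x^r`,
where `f_i = f([i]_q/[n]_q)` and
`g_i = (1 - q^{n-i-1}[i]_q/[n-1]_q) f_i + (q^{n-i-1}[i]_q/[n-1]_q) f_{i+1}`. -/
noncomputable def Talpha (q α : ℝ) (n : ℕ) (f : ℝ → ℝ) (x : ℝ) : ℝ :=
  let fs : ℕ → ℝ := fun i => f (qInt q i / qInt q n)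
  let gs : ℕ → ℝ := fun i =>
    (1 - q ^ (n - i - 1) * qInt q i / qInt q (n - 1)) * fs i +
      (q ^ (n - i - 1) * qInt q i / qInt q (n - 1)) * fs (i + 1)
  ∑ r ∈ Finset.range (n + 1),
    ((1 - α) * qBinom q (n - 1) r * qDiff q r gs 0 + α * qBinom q n r * qDiff q r fs 0) * x ^ r

/-!
Unfolding the recursion, `Δ_q^r f_i = Σ_j (-1)^j q^{j(j-1)/2} C_q(r, j) f_{i+r-j}`, the
coefficients obeying the q-Pascal rule. With `f_m = [m]_q^k / [n]_q^k` and `i = 1`, this is the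
defining sum of `S_q(k+1, r+1)` with its vanishing last term dropped, once the absorption identity
`C_q(r+1, j) [r+1-j]_q = [r+1]_q C_q(r, j)` trades one power of `[r+1-j]_q` for `[r+1]_q`.
-/

lemma qInt_zero (q : ℝ) : qInt q 0 = 0 := sum_range_zero _

lemma qInt_pos {q : ℝ} (hq : 0 < q) {m : ℕ} (hm : 0 < m) : 0 < qInt q m :=
  sum_pos (fun i _ => pow_pos hq i) (nonempty_range_iff.mpr hm.ne')

lemma qInt_add (q : ℝ) (a b : ℕ) : qInt q (a + b) = qInt q a + q ^ a * qInt q b := by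
  simp only [qInt, sum_range_add, mul_sum, pow_add]

lemma qFact_zero (q : ℝ) : qFact q 0 = 1 := prod_range_zero _

lemma qFact_succ (q : ℝ) (m : ℕ) : qFact q (m + 1) = qFact q m * qInt q (m + 1) :=
  prod_range_succ _ _

lemma qFact_pos {q : ℝ} (hq : 0 < q) (m : ℕ) : 0 < qFact q m :=
  prod_pos fun i _ => qInt_pos hq i.succ_pos

lemma qBinom_zero_right {q : ℝ} (hq : 0 < q) (m : ℕ) : qBinom q m 0 = 1 := by
  rw [qBinom, if_pos m.zero_le, qFact_zero, one_mul, Nat.sub_zero, div_self (qFact_pos hq m).ne']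

lemma qBinom_self {q : ℝ} (hq : 0 < q) (m : ℕ) : qBinom q m m = 1 := by
  rw [qBinom, if_pos le_rfl, Nat.sub_self, qFact_zero, mul_one, div_self (qFact_pos hq m).ne']

lemma qBinom_of_lt {q : ℝ} {m j : ℕ} (h : m < j) : qBinom q m j = 0 :=
  if_neg h.not_ge

lemma qBinom_succ_succ {q : ℝ} (hq : 0 < q) (r j : ℕ) :
    qBinom q (r + 1) (j + 1) = qBinom q r (j + 1) + q ^ (r - j) * qBinom q r j := by
  rcases lt_trichotomy j r with hjr | rfl | hrj
  · obtain ⟨s, rfl⟩ := Nat.exists_eq_add_of_lt hjr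
    have hsub₁ : j + s + 1 + 1 - (j + 1) = s + 1 := by omega
    have hsub₂ : j + s + 1 - (j + 1) = s := by omega
    have hsub₃ : j + s + 1 - j = s + 1 := by omega
    -- after clearing denominators, q-Pascal is `[r+1]_q = [r-j]_q + q^{r-j} [j+1]_q`
    have hsplit : qInt q (j + s + 1 + 1) = qInt q (s + 1) + q ^ (s + 1) * qInt q (j + 1) := by
      rw [← qInt_add]; ring_nf
    simp only [qBinom, if_pos (by omega : j + 1 ≤ j + s + 1 + 1),
      if_pos (by omega : j + 1 ≤ j + s + 1), if_pos (by omega : j ≤ j + s + 1),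
      hsub₁, hsub₂, hsub₃,
      qFact_succ q (j + s + 1),
      qFact_succ q s, qFact_succ q j]
    have := qFact_pos hq j
    have := qFact_pos hq s
    have := qInt_pos hq j.succ_pos
    have := qInt_pos hq s.succ_pos
    field_simp
    rw [hsplit]
    ring
  · rw [qBinom_self hq, qBinom_self hq, qBinom_of_lt j.lt_succ_self, Nat.sub_self, pow_zero]
    ring
  · rw [qBinom_of_lt (by omega), qBinom_of_lt (by omega), qBinom_of_lt hrj]
    ring

lemma qBinom_mul_qInt {q : ℝ} (hq : 0 < q) {r j : ℕ} (hj : j ≤ r) :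
    qBinom q (r + 1) j * qInt q (r + 1 - j) = qInt q (r + 1) * qBinom q r j := by
  obtain ⟨s, rfl⟩ := Nat.exists_eq_add_of_le hj
  simp only [qBinom, if_pos (by omega : j ≤ j + s + 1), if_pos (by omega : j ≤ j + s),
    show j + s + 1 - j = s + 1 by omega, Nat.add_sub_cancel_left, qFact_succ q (j + s),
    qFact_succ q s]
  have := qFact_pos hq j
  have := qFact_pos hq s
  have := qInt_pos hq s.succ_pos
  field_simp

noncomputable def qDiffCoeff (q : ℝ) (r j : ℕ) : ℝ :=
  (-1) ^ j * q ^ (j * (j - 1) / 2) * qBinom q r j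

lemma qDiffCoeff_zero_right {q : ℝ} (hq : 0 < q) (r : ℕ) : qDiffCoeff q r 0 = 1 := by
  simp [qDiffCoeff, qBinom_zero_right hq]

lemma qDiffCoeff_of_lt {q : ℝ} {r j : ℕ} (h : r < j) : qDiffCoeff q r j = 0 := by
  simp [qDiffCoeff, qBinom_of_lt h]

lemma qDiffCoeff_succ_succ {q : ℝ} (hq : 0 < q) {r j : ℕ} (hj : j ≤ r) :
    qDiffCoeff q (r + 1) (j + 1) = qDiffCoeff q r (j + 1) - q ^ r * qDiffCoeff q r j := by
  have htri : (j + 1) * (j + 1 - 1) / 2 = j * (j - 1) / 2 + j := by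
    simp only [← Nat.choose_two_right, Nat.choose_succ_succ', Nat.choose_one_right, add_comm]
  have hpow : q ^ r = q ^ (r - j) * q ^ j := by rw [← pow_add, Nat.sub_add_cancel hj]
  simp only [qDiffCoeff, qBinom_succ_succ hq, htri, hpow, pow_add, pow_succ]
  ring

lemma qDiff_eq_sum {q : ℝ} (hq : 0 < q) (r : ℕ) (f : ℕ → ℝ) (i : ℕ) :
    qDiff q r f i = ∑ j ∈ range (r + 1), qDiffCoeff q r j * f (i + r - j) := by
  induction r generalizing i with
  | zero => simp [qDiff, qDiffCoeff_zero_right hq]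
  | succ r ih =>
    have hshift : ∑ j ∈ range (r + 1), qDiffCoeff q r j * f (i + 1 + r - j) =
        ∑ j ∈ range (r + 1), qDiffCoeff q r (j + 1) * f (i + r - j) + f (i + (r + 1)) := by
      rw [sum_range_succ', sum_range_succ _ r, qDiffCoeff_of_lt r.lt_succ_self,
        qDiffCoeff_zero_right hq]
      simp only [zero_mul, add_zero, one_mul, Nat.sub_zero, add_assoc, add_comm 1 r]
      congr 1
      refine sum_congr rfl fun j _ => ?_
      rw [show i + (r + 1) - (j + 1) = i + r - j by omega]
    rw [qDiff, ih, ih, hshift, sum_range_succ' _ (r + 1), qDiffCoeff_zero_right hq, mul_sum,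
      ← sub_add_eq_add_sub, ← sum_sub_distrib]
    simp only [Nat.sub_zero, one_mul]
    congr 1
    refine sum_congr rfl fun j hj => ?_
    rw [qDiffCoeff_succ_succ hq (Nat.lt_succ_iff.mp (mem_range.mp hj)),
      show i + (r + 1) - (j + 1) = i + r - j by omega]
    ring

lemma qFact_mul_qStirling_succ {q : ℝ} (hq : 0 < q) (k r : ℕ) :
    qFact q r * q ^ (r * (r + 1) / 2) * qStirling q (k + 1) (r + 1) =
      ∑ j ∈ range (r + 1), qDiffCoeff q r j * qInt q (r + 1 - j) ^ k := by
  rw [qStirling, sum_range_succ, Nat.sub_self, qInt_zero, zero_pow k.succ_ne_zero, mul_zero,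
    add_zero, mul_sum, mul_sum]
  refine sum_congr rfl fun j hj => ?_
  -- the factor `[r+1]_q` produced here cancels against `[r+1]_q! = [r]_q! [r+1]_q`
  have habsorb : qBinom q (r + 1) j * qInt q (r + 1 - j) ^ (k + 1) =
      qInt q (r + 1) * (qBinom q r j * qInt q (r + 1 - j) ^ k) := by
    linear_combination
      qInt q (r + 1 - j) ^ k * qBinom_mul_qInt hq (Nat.lt_succ_iff.mp (mem_range.mp hj))
  rw [Nat.add_sub_cancel, mul_comm (r + 1) r, qFact_succ, qDiffCoeff, mul_assoc _ (qBinom _ _ _),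
    habsorb]
  have := qFact_pos hq r
  have := qInt_pos hq r.succ_pos
  have := pow_pos hq (r * (r + 1) / 2)
  field_simp

theorem qDiff_pow_one_general (q : ℝ) (hq : 0 < q) (n k r : ℕ) :
    qDiff q r (fun m => (qInt q m / qInt q n) ^ k) 1 =
      qFact q r * q ^ (r * (r + 1) / 2) / (qInt q n) ^ k * qStirling q (k + 1) (r + 1) := by
  rw [div_mul_eq_mul_div, qFact_mul_qStirling_succ hq, sum_div, qDiff_eq_sum hq, add_comm 1 r]
  simp only [div_pow, mul_div_assoc]

theorem qDiff_pow_one (q : ℝ) (hq : 0 < q) (n k r : ℕ) (hn : 1 ≤ n) (hr : r ≤ k) :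
    qDiff q r (fun m => (qInt q m / qInt q n) ^ k) 1 =
      qFact q r * q ^ (r * (r + 1) / 2) / (qInt q n) ^ k * qStirling q (k + 1) (r + 1) :=
  qDiff_pow_one_general q hq n k r
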